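/- arXiv:1807.00233 — 4 statements merged into one kernel-verified Lean document; each statement's English description precedes it below -/
import Mathlib

section
/- For every ω ∈ ℝ, every λ ∈ ℝ and every integer n ≥ 1, the quantity P_n(λ) admits the representation P_n(λ) = ∑_{k=0}^{n} α_{2k} λ^{2k}, where α_0 = 2 and, for each k ≥ 1, α_{2k} = ∑_{(k₁,k₂)} ∑_{1≤j₁<…<j_{k₁}≤n, 1≤l₁<…<l_{k₂}≤n} 1_♣(j,l) · ∫₀¹∫₀¹ v_{j₁}(x,y)⋯v_{j_{k₁}}(x,y) v_{l₁}(x,y)⋯v_{l_{k₂}}(x,y) dx dy, where the outer sum ranges over integers 0 ≤ k₁,k₂ ≤ n with k₁ + k₂ = 2k and k₁ − k₂ ≡ 0 (mod 4). -/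
open MeasureTheory Real
open scoped Matrix

/-- The skew-shift potential `v_j(x,y) = 2 cos(2π(j(j-1)/2·ω + j·y + x))`. -/
noncomputable def v (ω : ℝ) (j : ℕ) (x y : ℝ) : ℝ :=
  2 * Real.cos (2 * Real.pi * ((j : ℝ) * ((j : ℝ) - 1) / 2 * ω + (j : ℝ) * y + x))

/-- The zero-energy transfer matrix `A_j(x,y)`. -/
noncomputable def A (ω lam : ℝ) (j : ℕ) (x y : ℝ) : Matrix (Fin 2) (Fin 2) ℝ :=
  !![-(lam * v ω j x y), -1; 1, 0]

/-- The transfer matrix products `M_n(x,y) = A_n(x,y) ⋯ A_1(x,y)`. -/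
noncomputable def M (ω lam : ℝ) : ℕ → ℝ → ℝ → Matrix (Fin 2) (Fin 2) ℝ
  | 0, _, _ => 1
  | n + 1, x, y => A ω lam (n + 1) x y * M ω lam n x y

/-- `P_n(λ) = ∫₀¹∫₀¹ Tr(M_n(x,y)ᵀ M_n(x,y)) dx dy`. -/
noncomputable def P (ω : ℝ) (n : ℕ) (lam : ℝ) : ℝ :=
  ∫ x in (0:ℝ)..1, ∫ y in (0:ℝ)..1,
    Matrix.trace ((M ω lam n x y)ᵀ * M ω lam n x y)

/-- The parity ("clubsuit") condition on a pair of integer vectors: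
`j₁ - l₁` is even, and consecutive differences within `j` and within `l` are odd. -/
def club {k₁ k₂ : ℕ} (j : Fin k₁ → ℕ) (l : Fin k₂ → ℕ) : Prop :=
  (∀ (h₁ : 0 < k₁) (h₂ : 0 < k₂), Even ((j ⟨0, h₁⟩ : ℤ) - (l ⟨0, h₂⟩ : ℤ))) ∧
  (∀ s : ℕ, ∀ h : s + 1 < k₁, Odd ((j ⟨s + 1, h⟩ : ℤ) - (j ⟨s, by omega⟩ : ℤ))) ∧
  (∀ s : ℕ, ∀ h : s + 1 < k₂, Odd ((l ⟨s + 1, h⟩ : ℤ) - (l ⟨s, by omega⟩ : ℤ)))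

open scoped Classical in
/-- The coefficient `α_{2k}` of the polynomial `P_n`: `α₀ = 2`, and for `k ≥ 1` the sum
over `0 ≤ k₁,k₂ ≤ n` with `k₁+k₂ = 2k`, `k₁ - k₂ ≡ 0 (mod 4)`, of sums over strictly
increasing tuples `1 ≤ j₁ < … < j_{k₁} ≤ n`, `1 ≤ l₁ < … < l_{k₂} ≤ n` satisfying the
clubsuit condition, of `∫₀¹∫₀¹ v_{j₁}⋯v_{j_{k₁}} v_{l₁}⋯v_{l_{k₂}} dx dy`. -/
noncomputable def alpha (ω : ℝ) (n k : ℕ) : ℝ :=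
  if k = 0 then 2 else
    ∑ k₁ ∈ Finset.range (n + 1), ∑ k₂ ∈ Finset.range (n + 1),
      if k₁ + k₂ = 2 * k ∧ (4 : ℤ) ∣ ((k₁ : ℤ) - (k₂ : ℤ)) then
        ∑ j ∈ Fintype.piFinset (fun _ : Fin k₁ => Finset.Icc 1 n),
          ∑ l ∈ Fintype.piFinset (fun _ : Fin k₂ => Finset.Icc 1 n),
            if StrictMono j ∧ StrictMono l ∧ club j l then
              ∫ x in (0:ℝ)..1, ∫ y in (0:ℝ)..1,
                (∏ s, v ω (j s) x y) * (∏ s, v ω (l s) x y)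
            else 0
      else 0


/-!
Write `A_j = -λ v_j E + J` with `E = diag(1, 0)` and `J` the quarter turn, so that
`M_n = ∑_S (-λ)^|S| (∏_{i ∈ S} v_i) W_S`, where the word `W_S` has `E` at the positions in
`S ⊆ {1, …, n}` and `J` elsewhere. Since `J^4 = 1` and `E J^m E = cos (π m / 2) E`, the word
collapses to `± J^(n - max S) E J^(min S - 1)` when consecutive elements of `S` differ by odd
numbers, and to `0` otherwise; so `Tr(W_Sᵀ W_T)` is a product of values `cos (π m / 2)` read off
from residues mod 4. Shifting `y` by `1/2` multiplies `∏_S v ∏_T v` by `(-1)^(∑ S + ∑ T)`, so its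
integral vanishes when `∑ S + ∑ T` is odd. When that sum is even, the residues mod 4 show that
`Tr(W_Sᵀ W_T)` is `1` if `(S, T) ∈ ♣` and `4 ∣ |S| - |T|`, and `0` otherwise, except for
`S = T = ∅`, where it is `2`.
-/

open Finset

theorem Function.Antiperiodic.intervalIntegral_add_two_mul_eq_zero {f : ℝ → ℝ} {c : ℝ}
    (hf : Function.Antiperiodic f c) (hcont : Continuous f) (a : ℝ) :
    ∫ x in a..a + 2 * c, f x = 0 := by
  have hshift : ∫ x in a + c..a + 2 * c, f x = -∫ x in a..a + c, f x := by
    rw [show a + 2 * c = a + c + c by ring, ← intervalIntegral.integral_comp_add_right,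
      ← intervalIntegral.integral_neg]
    exact intervalIntegral.integral_congr fun x _ => hf x
  rw [← intervalIntegral.integral_add_adjacent_intervals (b := a + c)
    (hcont.intervalIntegrable _ _) (hcont.intervalIntegrable _ _), hshift, add_neg_cancel]

lemma intervalIntegral_intervalIntegral_sum_mul {ι : Type*} (s : Finset ι) (c : ι → ℝ)
    (g : ι → ℝ → ℝ → ℝ) (hg : ∀ i ∈ s, Continuous (Function.uncurry (g i))) (a b a' b' : ℝ) :
    ∫ x in a..b, ∫ y in a'..b', ∑ i ∈ s, c i * g i x y
      = ∑ i ∈ s, c i * ∫ x in a..b, ∫ y in a'..b', g i x y := by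
  have hinner : ∀ x, ∫ y in a'..b', ∑ i ∈ s, c i * g i x y
      = ∑ i ∈ s, c i * ∫ y in a'..b', g i x y := fun x => by
    rw [intervalIntegral.integral_finsetSum fun i hi =>
      ((hg i hi).uncurry_left x).intervalIntegrable _ _ |>.const_mul (c i)]
    simp only [intervalIntegral.integral_const_mul]
  simp only [hinner]
  rw [intervalIntegral.integral_finsetSum fun i hi =>
    (intervalIntegral.continuous_parametric_intervalIntegral_of_continuous' (hg i hi) a' b'
      |>.intervalIntegrable _ _).const_mul (c i)]
  simp only [intervalIntegral.integral_const_mul]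

lemma image_univ_fin_succ {α : Type*} [DecidableEq α] {p : ℕ} (j : Fin (p + 1) → α) :
    univ.image j = insert (j (Fin.last p)) (univ.image (j ∘ Fin.castSucc)) := by
  ext x; simp [Fin.exists_fin_succ', or_comm, eq_comm]

lemma sum_powersetCard_eq_sum_strictMono {α R : Type*} [LinearOrder α] [AddCommMonoid R]
    (s : Finset α) (k : ℕ) (f : Finset α → R) :
    ∑ S ∈ s.powersetCard k, f S
      = ∑ j ∈ Fintype.piFinset fun _ : Fin k => s,
          if StrictMono j then f (univ.image j) else 0 := by
  rw [← sum_filter]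
  refine sum_bij' (fun S hS => S.orderEmbOfFin (mem_powersetCard.mp hS).2)
    (fun j _ => univ.image j) (fun S hS => ?_) (fun j hj => ?_) (fun S _ => ?_) (fun j hj => ?_)
    (fun S _ => by rw [image_orderEmbOfFin_univ])
  · exact mem_filter.mpr ⟨Fintype.mem_piFinset.mpr fun i =>
      (mem_powersetCard.mp hS).1 (orderEmbOfFin_mem _ _ i), OrderEmbedding.strictMono _⟩
  · obtain ⟨hjs, hmono⟩ := mem_filter.mp hj
    refine mem_powersetCard.mpr ⟨fun x hx => ?_, ?_⟩
    · obtain ⟨i, _, rfl⟩ := mem_image.mp hx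
      exact Fintype.mem_piFinset.mp hjs i
    · rw [card_image_of_injective _ hmono.injective, card_univ, Fintype.card_fin]
  · exact image_orderEmbOfFin_univ _ _
  · exact (orderEmbOfFin_unique _ (fun i => mem_image_of_mem j (mem_univ i))
      (mem_filter.mp hj).2).symm

lemma sum_range_sum_sum_ite_add_eq_two_mul {R : Type*} [AddCommMonoid R] (n : ℕ)
    (p : ℕ → ℕ → Prop) [DecidableRel p] (hp : ∀ a b, p a b → Even (a + b))
    (f : ℕ → ℕ → ℕ → R) :
    ∑ k ∈ range (n + 1), ∑ a ∈ range (n + 1), ∑ b ∈ range (n + 1),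
        (if a + b = 2 * k ∧ p a b then f a b k else 0)
      = ∑ a ∈ range (n + 1), ∑ b ∈ range (n + 1), if p a b then f a b ((a + b) / 2) else 0 := by
  rw [sum_comm]
  refine sum_congr rfl fun a ha => ?_
  rw [sum_comm]
  refine sum_congr rfl fun b hb => ?_
  simp only [mem_range] at ha hb
  split_ifs with hab
  · obtain ⟨m, hm⟩ := hp a b hab
    rw [sum_eq_single_of_mem m (mem_range.mpr (by omega)), if_pos ⟨by omega, hab⟩,
      show (a + b) / 2 = m by omega]
    intro k _ hk
    rw [if_neg fun h => hk (by omega)]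
  · exact sum_eq_zero fun k _ => if_neg fun h => hab h.2

namespace SkewShift

open Matrix
open scoped Classical

-- `cos (π a / 2)`
def cosQuarter (a : ZMod 4) : ℤ := if a = 0 then 1 else if a = 2 then -1 else 0

lemma cosQuarter_mul_cosQuarter {a b : ZMod 4} (hb : 2 * b = 0) :
    cosQuarter a * cosQuarter b = cosQuarter (a + b) := by
  revert a b; decide

lemma cosQuarter_eq_zero_iff {a : ZMod 4} : cosQuarter a = 0 ↔ 2 * a ≠ 0 := by
  revert a; decide

lemma even_iff_two_mul_intCast_eq_zero (m : ℤ) : Even m ↔ 2 * (m : ZMod 4) = 0 := by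
  rw [← Int.cast_ofNat, ← Int.cast_mul, ZMod.intCast_zmod_eq_zero_iff_dvd, even_iff_two_dvd]
  omega

lemma even_iff_two_mul_natCast_eq_zero (m : ℕ) : Even m ↔ 2 * (m : ZMod 4) = 0 := by
  simpa using even_iff_two_mul_intCast_eq_zero m

lemma odd_iff_two_mul_intCast_sub_one_eq_zero (m : ℤ) :
    Odd m ↔ 2 * ((m : ZMod 4) - 1) = 0 := by
  rw [← Int.not_even_iff_odd, ← Int.even_sub_one, even_iff_two_mul_intCast_eq_zero]
  push_cast; rfl

lemma four_dvd_natCast_sub_iff (a b : ℕ) : (4 : ℤ) ∣ (a : ℤ) - b ↔ (a : ZMod 4) = b := by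
  have := ZMod.intCast_eq_intCast_iff_dvd_sub (b : ℤ) a 4
  push_cast at this
  rw [← this, eq_comm]

def E : Matrix (Fin 2) (Fin 2) ℝ := !![1, 0; 0, 0]

def J : Matrix (Fin 2) (Fin 2) ℝ := !![0, -1; 1, 0]

def rot (a : ZMod 4) : Matrix (Fin 2) (Fin 2) ℝ := J ^ a.val

lemma J_pow_four : J ^ 4 = 1 := by
  have hJ2 : J ^ 2 = -1 := by
    ext i k; fin_cases i <;> fin_cases k <;> simp [J, sq]
  rw [show 4 = 2 * 2 from rfl, pow_mul, hJ2]; simp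

lemma rot_natCast (m : ℕ) : rot m = J ^ m := by
  rw [rot, ZMod.val_natCast]
  conv_rhs => rw [← Nat.div_add_mod m 4, pow_add, pow_mul, J_pow_four, one_pow, one_mul]

lemma rot_zero : rot 0 = 1 := by simp [rot]

lemma rot_add (a b : ZMod 4) : rot (a + b) = rot a * rot b := by
  rw [← ZMod.natCast_zmod_val a, ← ZMod.natCast_zmod_val b, ← Nat.cast_add, rot_natCast,
    rot_natCast, rot_natCast, pow_add]

lemma transpose_rot (a : ZMod 4) : (rot a)ᵀ = rot (-a) := by
  have hJ : Jᵀ = J ^ 3 := by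
    ext i k; fin_cases i <;> fin_cases k <;> simp [J, pow_succ]
  have h3 : -a = ((3 * a.val : ℕ) : ZMod 4) := by
    rw [Nat.cast_mul, ZMod.natCast_zmod_val, ← sub_eq_zero]
    ring_nf; rw [show (4 : ZMod 4) = 0 from rfl]; simp
  rw [rot, transpose_pow, hJ, ← pow_mul, h3, rot_natCast]

lemma transpose_E : Eᵀ = E := by
  ext i k; fin_cases i <;> fin_cases k <;> rfl

lemma E_mul_rot_mul_E (a : ZMod 4) : E * rot a * E = (cosQuarter a : ℝ) • E := by
  rw [← ZMod.natCast_zmod_val a, rot_natCast]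
  have h := ZMod.val_lt a
  interval_cases a.val <;> ext i k <;> fin_cases i <;> fin_cases k <;>
    simp [E, J, cosQuarter, pow_succ, show (1 : ZMod 4) ≠ 0 ∧ (1 : ZMod 4) ≠ 2 ∧
      (2 : ZMod 4) ≠ 0 ∧ (3 : ZMod 4) ≠ 0 ∧ (3 : ZMod 4) ≠ 2 by decide]

lemma trace_E_mul_rot (a : ZMod 4) : (E * rot a).trace = cosQuarter a := by
  have hE : E * E = E := by
    ext i k; fin_cases i <;> fin_cases k <;> simp [E]
  rw [← hE, Matrix.mul_assoc, trace_mul_comm, Matrix.mul_assoc, ← Matrix.mul_assoc,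
    E_mul_rot_mul_E, trace_smul]
  simp [E, trace, Fin.sum_univ_two]

lemma trace_transpose_rot_mul_rot (c : ZMod 4) : ((rot c)ᵀ * rot c).trace = 2 := by
  rw [transpose_rot, ← rot_add, neg_add_cancel, rot_zero, trace_one]; simp

lemma trace_transpose_rot_mul (c a b : ZMod 4) :
    ((rot c)ᵀ * (rot a * E * rot b)).trace = cosQuarter (a + b - c) := by
  rw [transpose_rot, ← Matrix.mul_assoc, ← Matrix.mul_assoc, trace_mul_comm,
    ← Matrix.mul_assoc, ← rot_add, ← rot_add, trace_mul_comm, trace_E_mul_rot]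
  ring_nf

lemma trace_transpose_mul_rank_one (a b a' b' : ZMod 4) :
    ((rot a * E * rot b)ᵀ * (rot a' * E * rot b')).trace
      = cosQuarter (a' - a) * cosQuarter (b' - b) := by
  have : (rot a * E * rot b)ᵀ * (rot a' * E * rot b')
      = rot (-b) * (E * rot (a' - a) * E) * rot b' := by
    simp only [transpose_mul, transpose_rot, transpose_E, sub_eq_neg_add, rot_add,
      Matrix.mul_assoc]
  rw [this, E_mul_rot_mul_E, Matrix.mul_smul, Matrix.smul_mul, trace_smul, trace_mul_comm,
    ← Matrix.mul_assoc, ← rot_add, trace_mul_comm, trace_E_mul_rot, ← sub_eq_add_neg,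
    smul_eq_mul]

def W : ℕ → Finset ℕ → Matrix (Fin 2) (Fin 2) ℝ
  | 0, _ => 1
  | n + 1, S => (if n + 1 ∈ S then E else J) * W n S

lemma W_insert_of_lt {n m : ℕ} (h : n < m) (S : Finset ℕ) : W n (insert m S) = W n S := by
  induction n with
  | zero => rfl
  | succ n ih => simp [W, ih (by omega), show n + 1 ≠ m by omega]

lemma W_add_of_forall_le {m : ℕ} {S : Finset ℕ} (hS : ∀ i ∈ S, i ≤ m) (d : ℕ) :
    W (m + d) S = J ^ d * W m S := by
  induction d with
  | zero => simp
  | succ d ih =>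
    have : m + d + 1 ∉ S := fun h => by have := hS _ h; omega
    rw [← add_assoc, W, if_neg this, ih, pow_succ', Matrix.mul_assoc]

lemma W_empty (n : ℕ) : W n ∅ = J ^ n := by
  simpa [W] using W_add_of_forall_le (m := 0) (S := ∅) (by simp) n

lemma W_add_insert {m : ℕ} {S : Finset ℕ} (hS : ∀ i ∈ S, i ≤ m) (d : ℕ) :
    W (m + 1 + d) (insert (m + 1) S) = J ^ d * E * W m S := by
  rw [W_add_of_forall_le (fun i hi => ?_), W, if_pos (mem_insert_self _ _),
    W_insert_of_lt (by omega), Matrix.mul_assoc]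
  rcases mem_insert.mp hi with rfl | hi
  exacts [le_rfl, (hS i hi).trans (by omega)]

def gapSign {p : ℕ} (j : Fin (p + 1) → ℕ) : ℤ :=
  ∏ s : Fin p, cosQuarter ((j s.succ : ZMod 4) - j s.castSucc - 1)

lemma gapSign_succ {p : ℕ} (j : Fin (p + 2) → ℕ) :
    gapSign j = gapSign (j ∘ Fin.castSucc)
      * cosQuarter ((j (Fin.last (p + 1)) : ZMod 4) - j (Fin.last p).castSucc - 1) := by
  simp [gapSign, Fin.prod_univ_castSucc]

lemma W_image {p : ℕ} (j : Fin (p + 1) → ℕ) (hj : StrictMono j) (h1 : 1 ≤ j 0) :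
    ∀ {n : ℕ}, j (Fin.last p) ≤ n →
      W n (univ.image j) = (gapSign j : ℝ) • (rot (n - j (Fin.last p)) * E * rot (j 0 - 1)) := by
  induction p with
  | zero =>
    intro n hn
    obtain ⟨m, hm⟩ : ∃ m, j 0 = m + 1 := ⟨j 0 - 1, by omega⟩
    obtain ⟨d, rfl⟩ : ∃ d, n = m + 1 + d := ⟨n - (m + 1), by simp [Fin.last] at hn; omega⟩
    have hS : univ.image j = insert (m + 1) ∅ := by
      rw [image_univ_fin_succ]; simp [Fin.last, hm]
    rw [hS, W_add_insert (by simp), W_empty, gapSign, Fin.last_zero, hm]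
    simp [← rot_natCast]
  | succ p ih =>
    intro n hn
    set j' := j ∘ Fin.castSucc
    have hlt : j' (Fin.last p) < j (Fin.last (p + 1)) := hj (Fin.castSucc_lt_last _)
    obtain ⟨m, hm⟩ : ∃ m, j (Fin.last (p + 1)) = m + 1 := ⟨j (Fin.last (p + 1)) - 1, by omega⟩
    obtain ⟨d, rfl⟩ : ∃ d, n = m + 1 + d := ⟨n - (m + 1), by omega⟩
    have hS : ∀ i ∈ univ.image j', i ≤ m := by
      simp only [mem_image, mem_univ, true_and, forall_exists_index, forall_apply_eq_imp_iff]
      intro s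
      have := hj (Fin.castSucc_lt_last s)
      simp only [j', Function.comp_apply]
      omega
    have hx : (j (Fin.last (p + 1)) : ZMod 4) - j (Fin.last p).castSucc - 1
        = m - j' (Fin.last p) := by
      rw [hm]; push_cast; simp only [j', Function.comp_apply]; ring
    rw [gapSign_succ, hx, image_univ_fin_succ, hm, W_add_insert hS,
      ih j' (hj.comp Fin.strictMono_castSucc) h1 (by omega)]
    have hd : ((m + 1 + d : ℕ) : ZMod 4) - (m + 1 : ℕ) = d := by push_cast; ring
    rw [hd, rot_natCast, Matrix.mul_smul,
      show J ^ d * E * (rot (m - j' (Fin.last p)) * E * rot (j' 0 - 1))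
        = J ^ d * (E * rot (m - j' (Fin.last p)) * E) * rot (j' 0 - 1) by
          simp only [Matrix.mul_assoc], E_mul_rot_mul_E]
    simp only [Matrix.mul_smul, Matrix.smul_mul, smul_smul, Int.cast_mul, mul_comm]
    rfl

def OddGaps {p : ℕ} (j : Fin (p + 1) → ℕ) : Prop :=
  ∀ s : Fin p, Odd ((j s.succ : ℤ) - j s.castSucc)

lemma OddGaps.two_mul_gap {p : ℕ} {j : Fin (p + 1) → ℕ} (h : OddGaps j) (s : Fin p) :
    2 * ((j s.succ : ZMod 4) - j s.castSucc - 1) = 0 := by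
  have := (odd_iff_two_mul_intCast_sub_one_eq_zero _).mp (h s)
  push_cast at this
  exact this

lemma gapSign_eq_zero {p : ℕ} {j : Fin (p + 1) → ℕ} (h : ¬ OddGaps j) : gapSign j = 0 := by
  obtain ⟨s, hs⟩ := not_forall.mp h
  refine prod_eq_zero (mem_univ s) (cosQuarter_eq_zero_iff.mpr ?_)
  rw [Int.not_odd_iff_even, even_iff_two_mul_intCast_eq_zero] at hs
  push_cast at hs
  rw [mul_sub, hs]
  decide

lemma OddGaps.castSucc {p : ℕ} {j : Fin (p + 2) → ℕ} (h : OddGaps j) :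
    OddGaps (j ∘ Fin.castSucc) := fun s => by
  have := h s.castSucc
  rwa [Fin.succ_castSucc] at this

lemma OddGaps.two_mul_last_gap {p : ℕ} {j : Fin (p + 2) → ℕ} (h : OddGaps j) :
    2 * ((j (Fin.last (p + 1)) : ZMod 4) - j (Fin.last p).castSucc - 1) = 0 := by
  simpa using h.two_mul_gap (Fin.last p)

lemma OddGaps.two_mul_span {p : ℕ} {j : Fin (p + 1) → ℕ} (h : OddGaps j) :
    2 * ((j (Fin.last p) : ZMod 4) - j 0 - p) = 0 := by
  induction p with
  | zero => simp
  | succ p ih =>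
    have h₁ := ih h.castSucc
    simp only [Function.comp_apply, Fin.castSucc_zero] at h₁
    push_cast
    linear_combination h₁ + h.two_mul_last_gap

lemma OddGaps.gapSign_eq {p : ℕ} {j : Fin (p + 1) → ℕ} (h : OddGaps j) :
    gapSign j = cosQuarter ((j (Fin.last p) : ZMod 4) - j 0 - p) := by
  induction p with
  | zero => simp [gapSign, cosQuarter]
  | succ p ih =>
    rw [gapSign_succ, ih h.castSucc, cosQuarter_mul_cosQuarter h.two_mul_last_gap]
    congr 1
    simp only [Function.comp_apply, Fin.castSucc_zero]
    push_cast; ring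

lemma OddGaps.two_mul_sum {p : ℕ} {j : Fin (p + 1) → ℕ} (h : OddGaps j) :
    2 * ∑ s, (j s : ZMod 4) = 2 * (p + 1) * j 0 + (p + 1) * p := by
  induction p with
  | zero => simp
  | succ p ih =>
    have h₁ := ih h.castSucc
    have h₂ := h.two_mul_span
    simp only [Function.comp_apply, Fin.castSucc_zero] at h₁
    rw [Fin.sum_univ_castSucc]
    push_cast at h₂ ⊢
    linear_combination h₁ + h₂

lemma forall_odd_iff_oddGaps {p : ℕ} (j : Fin (p + 1) → ℕ) :
    (∀ s : ℕ, ∀ h : s + 1 < p + 1, Odd ((j ⟨s + 1, h⟩ : ℤ) - (j ⟨s, by omega⟩ : ℤ)))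
      ↔ OddGaps j :=
  ⟨fun H s => H s (by omega), fun H s hs => H ⟨s, by omega⟩⟩

lemma club_succ_succ_iff {p q : ℕ} (j : Fin (p + 1) → ℕ) (l : Fin (q + 1) → ℕ) :
    club j l ↔ Even ((j 0 : ℤ) - l 0) ∧ OddGaps j ∧ OddGaps l := by
  rw [club, forall_odd_iff_oddGaps, forall_odd_iff_oddGaps]
  exact and_congr_left' ⟨fun H => H (by omega) (by omega), fun H _ _ => H⟩

lemma club_zero_left_iff {q : ℕ} (j : Fin 0 → ℕ) (l : Fin (q + 1) → ℕ) :
    club j l ↔ OddGaps l := by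
  rw [club, forall_odd_iff_oddGaps]
  exact ⟨fun H => H.2.2, fun H => ⟨fun h => absurd h (lt_irrefl 0), fun _ h => by omega, H⟩⟩

lemma club_comm {k₁ k₂ : ℕ} (j : Fin k₁ → ℕ) (l : Fin k₂ → ℕ) : club j l ↔ club l j := by
  unfold club
  rw [and_comm (a := ∀ s : ℕ, ∀ h : s + 1 < k₁, _)]
  refine and_congr_left' ⟨fun H h₂ h₁ => ?_, fun H h₁ h₂ => ?_⟩ <;>
    rw [← even_neg, neg_sub] <;> exact H _ _

def traceCoeff (n : ℕ) {k₁ k₂ : ℕ} (j : Fin k₁ → ℕ) (l : Fin k₂ → ℕ) : ℝ :=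
  ((W n (univ.image j))ᵀ * W n (univ.image l)).trace

lemma traceCoeff_comm (n : ℕ) {k₁ k₂ : ℕ} (j : Fin k₁ → ℕ) (l : Fin k₂ → ℕ) :
    traceCoeff n j l = traceCoeff n l j := by
  rw [traceCoeff, ← trace_transpose, transpose_mul, transpose_transpose, traceCoeff]

lemma traceCoeff_zero_zero (n : ℕ) (j l : Fin 0 → ℕ) : traceCoeff n j l = 2 := by
  simp [traceCoeff, W_empty, ← rot_natCast, trace_transpose_rot_mul_rot]

lemma traceCoeff_succ_succ {n p q : ℕ} {j : Fin (p + 1) → ℕ} {l : Fin (q + 1) → ℕ}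
    (hj : StrictMono j) (hl : StrictMono l) (hj₁ : 1 ≤ j 0) (hl₁ : 1 ≤ l 0)
    (hjn : j (Fin.last p) ≤ n) (hln : l (Fin.last q) ≤ n) :
    traceCoeff n j l = gapSign j * gapSign l
      * cosQuarter ((j (Fin.last p) : ZMod 4) - l (Fin.last q))
      * cosQuarter ((l 0 : ZMod 4) - j 0) := by
  rw [traceCoeff, W_image j hj hj₁ hjn, W_image l hl hl₁ hln, transpose_smul, Matrix.smul_mul,
    Matrix.mul_smul, trace_smul, trace_smul, trace_transpose_mul_rank_one, smul_eq_mul,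
    smul_eq_mul]
  ring_nf

lemma traceCoeff_zero_succ {n q : ℕ} (j : Fin 0 → ℕ) {l : Fin (q + 1) → ℕ}
    (hl : StrictMono l) (hl₁ : 1 ≤ l 0) (hln : l (Fin.last q) ≤ n) :
    traceCoeff n j l = gapSign l * cosQuarter ((l 0 : ZMod 4) - 1 - l (Fin.last q)) := by
  rw [traceCoeff, W_image l hl hl₁ hln, univ_eq_empty, image_empty, W_empty, ← rot_natCast,
    Matrix.mul_smul, trace_smul, trace_transpose_rot_mul, smul_eq_mul]
  ring_nf

/- The mod-4 bookkeeping behind `Tr(W_Sᵀ W_T)`: `a, b` (resp. `a', b'`) are the first and last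
entries of a tuple with `p` (resp. `q`) gaps; the hypotheses say that all gaps are odd and that
the sum of all entries of both tuples is even (see `OddGaps.two_mul_sum`). -/
lemma cosQuarter_sign_succ_succ : ∀ a b a' b' p q : ZMod 4,
    2 * (b - a - p) = 0 → 2 * (b' - a' - q) = 0 →
    2 * (p + 1) * a + (p + 1) * p + (2 * (q + 1) * a' + (q + 1) * q) = 0 →
    cosQuarter (b - a - p) * cosQuarter (b' - a' - q) * cosQuarter (b - b') * cosQuarter (a' - a)
      = if 2 * (a - a') = 0 ∧ p = q then 1 else 0 := by
  decide +kernel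

lemma cosQuarter_sign_zero_succ : ∀ a b q : ZMod 4,
    2 * (b - a - q) = 0 → 2 * (q + 1) * a + (q + 1) * q = 0 →
    cosQuarter (b - a - q) * cosQuarter (a - 1 - b) = if q + 1 = 0 then 1 else 0 := by
  decide +kernel

lemma traceCoeff_zero_succ_eq_ite {n q : ℕ} (j : Fin 0 → ℕ) {l : Fin (q + 1) → ℕ}
    (hl : StrictMono l) (hl₁ : 1 ≤ l 0) (hln : l (Fin.last q) ≤ n)
    (hsum : Even (∑ s, l s)) :
    traceCoeff n j l = if club j l ∧ (4 : ℤ) ∣ ((0 : ℕ) : ℤ) - ((q + 1 : ℕ) : ℤ) then 1 else 0 := by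
  rw [traceCoeff_zero_succ j hl hl₁ hln, club_zero_left_iff]
  by_cases hgap : OddGaps l
  · rw [even_iff_two_mul_natCast_eq_zero, Nat.cast_sum] at hsum
    have key := cosQuarter_sign_zero_succ _ _ _ hgap.two_mul_span (hgap.two_mul_sum.symm.trans hsum)
    have hcond : (4 : ℤ) ∣ ((0 : ℕ) : ℤ) - ((q + 1 : ℕ) : ℤ) ↔ (q : ZMod 4) + 1 = 0 := by
      rw [four_dvd_natCast_sub_iff, eq_comm]; push_cast; rfl
    simp only [hgap.gapSign_eq, hcond, hgap, true_and, ← Int.cast_mul, key]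
    split_ifs <;> simp
  · rw [gapSign_eq_zero hgap, if_neg (fun h => hgap h.1)]
    simp

lemma traceCoeff_succ_succ_eq_ite {n p q : ℕ} {j : Fin (p + 1) → ℕ} {l : Fin (q + 1) → ℕ}
    (hj : StrictMono j) (hl : StrictMono l) (hj₁ : 1 ≤ j 0) (hl₁ : 1 ≤ l 0)
    (hjn : j (Fin.last p) ≤ n) (hln : l (Fin.last q) ≤ n) (hsum : Even (∑ s, j s + ∑ s, l s)) :
    traceCoeff n j l
      = if club j l ∧ (4 : ℤ) ∣ ((p + 1 : ℕ) : ℤ) - ((q + 1 : ℕ) : ℤ) then 1 else 0 := by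
  rw [traceCoeff_succ_succ hj hl hj₁ hl₁ hjn hln, club_succ_succ_iff]
  by_cases hgap : OddGaps j ∧ OddGaps l
  · obtain ⟨hgj, hgl⟩ := hgap
    rw [even_iff_two_mul_natCast_eq_zero] at hsum
    push_cast at hsum
    have key := cosQuarter_sign_succ_succ _ _ _ _ _ _ hgj.two_mul_span hgl.two_mul_span
      (by rw [← hgj.two_mul_sum, ← hgl.two_mul_sum, ← mul_add]; exact hsum)
    have hcond : (4 : ℤ) ∣ ((p + 1 : ℕ) : ℤ) - ((q + 1 : ℕ) : ℤ) ↔ (p : ZMod 4) = q := by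
      rw [four_dvd_natCast_sub_iff]; push_cast; exact add_left_inj 1
    have heven : Even ((j 0 : ℤ) - l 0) ↔ 2 * ((j 0 : ZMod 4) - l 0) = 0 := by
      rw [even_iff_two_mul_intCast_eq_zero]; push_cast; rfl
    simp only [hgj.gapSign_eq, hgl.gapSign_eq, hcond, heven, hgj, hgl, and_true,
      ← Int.cast_mul, key]
    split_ifs <;> simp
  · rw [if_neg (fun h => hgap h.1.2)]
    rcases not_and_or.mp hgap with h | h <;> simp [gapSign_eq_zero h]

lemma traceCoeff_eq_ite {n k₁ k₂ : ℕ} {j : Fin k₁ → ℕ} {l : Fin k₂ → ℕ}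
    (hj : StrictMono j) (hl : StrictMono l) (hjn : ∀ s, j s ∈ Icc 1 n) (hln : ∀ s, l s ∈ Icc 1 n)
    (hne : k₁ ≠ 0 ∨ k₂ ≠ 0) (hsum : Even (∑ s, j s + ∑ s, l s)) :
    traceCoeff n j l = if club j l ∧ (4 : ℤ) ∣ (k₁ : ℤ) - k₂ then 1 else 0 := by
  simp only [mem_Icc] at hjn hln
  rcases k₁ with _ | p <;> rcases k₂ with _ | q
  · simp at hne
  · simp only [univ_eq_empty, sum_empty, zero_add] at hsum
    exact traceCoeff_zero_succ_eq_ite j hl (hln 0).1 (hln _).2 hsum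
  · simp only [univ_eq_empty, sum_empty, add_zero] at hsum
    rw [traceCoeff_comm, traceCoeff_zero_succ_eq_ite l hj (hjn 0).1 (hjn _).2 hsum]
    simp only [club_comm l j, dvd_sub_comm]
  · exact traceCoeff_succ_succ_eq_ite hj hl (hjn 0).1 (hln 0).1 (hjn _).2 (hln _).2 hsum

lemma v_add_half (ω : ℝ) (j : ℕ) (x y : ℝ) : v ω j x (y + 1 / 2) = (-1) ^ j * v ω j x y := by
  rw [v, v, mul_left_comm, ← Real.cos_add_nat_mul_pi]
  congr 2
  ring

lemma prod_v_add_half {k : ℕ} (ω : ℝ) (j : Fin k → ℕ) (x y : ℝ) :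
    ∏ s, v ω (j s) x (y + 1 / 2) = (-1) ^ (∑ s, j s) * ∏ s, v ω (j s) x y := by
  simp only [v_add_half, prod_mul_distrib, prod_pow_eq_pow_sum]

noncomputable def vIntegral (ω : ℝ) {k₁ k₂ : ℕ} (j : Fin k₁ → ℕ) (l : Fin k₂ → ℕ) : ℝ :=
  ∫ x in (0 : ℝ)..1, ∫ y in (0 : ℝ)..1, (∏ s, v ω (j s) x y) * (∏ s, v ω (l s) x y)

lemma vIntegral_zero_zero (ω : ℝ) (j l : Fin 0 → ℕ) : vIntegral ω j l = 1 := by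
  simp [vIntegral]

lemma vIntegral_eq_zero {k₁ k₂ : ℕ} (ω : ℝ) (j : Fin k₁ → ℕ) (l : Fin k₂ → ℕ)
    (hsum : ¬ Even (∑ s, j s + ∑ s, l s)) : vIntegral ω j l = 0 := by
  have hanti : ∀ x, Function.Antiperiodic
      (fun y => (∏ s, v ω (j s) x y) * (∏ s, v ω (l s) x y)) (1 / 2) := fun x y => by
    have hsign : (-1 : ℝ) ^ (∑ s, j s) * (-1) ^ (∑ s, l s) = -1 := by
      rw [← pow_add, (Nat.not_even_iff_odd.mp hsum).neg_one_pow]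
    simp only [prod_v_add_half]
    linear_combination (∏ s, v ω (j s) x y) * (∏ s, v ω (l s) x y) * hsign
  have hcont : ∀ x, Continuous fun y => (∏ s, v ω (j s) x y) * (∏ s, v ω (l s) x y) := by
    intro x; simp only [v]; fun_prop
  have hinner : ∀ x, ∫ y in (0 : ℝ)..1, (∏ s, v ω (j s) x y) * (∏ s, v ω (l s) x y) = 0 :=
    fun x => by simpa using (hanti x).intervalIntegral_add_two_mul_eq_zero (hcont x) 0
  simp [vIntegral, hinner]

lemma neg_pow_mul_traceCoeff_mul_vIntegral_eq_ite {n k₁ k₂ : ℕ} (ω lam : ℝ) {j : Fin k₁ → ℕ}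
    {l : Fin k₂ → ℕ} (hj : StrictMono j) (hl : StrictMono l) (hjn : ∀ s, j s ∈ Icc 1 n)
    (hln : ∀ s, l s ∈ Icc 1 n) (hne : k₁ ≠ 0 ∨ k₂ ≠ 0) :
    (-lam) ^ (k₁ + k₂) * (traceCoeff n j l * vIntegral ω j l)
      = if club j l ∧ (4 : ℤ) ∣ (k₁ : ℤ) - k₂ then lam ^ (k₁ + k₂) * vIntegral ω j l else 0 := by
  by_cases hsum : Even (∑ s, j s + ∑ s, l s)
  · rw [traceCoeff_eq_ite hj hl hjn hln hne hsum]
    split_ifs with h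
    · obtain ⟨c, hc⟩ := h.2
      rw [one_mul, Even.neg_pow ⟨(k₁ + k₂) / 2, by omega⟩]
    · simp
  · simp [vIntegral_eq_zero ω j l hsum]

lemma A_eq_smul_E_add_J (ω lam : ℝ) (j : ℕ) (x y : ℝ) :
    A ω lam j x y = (-(lam * v ω j x y)) • E + J := by
  ext i k; fin_cases i <;> fin_cases k <;> simp [A, E, J]

lemma M_eq_sum_powerset (ω lam : ℝ) (n : ℕ) (x y : ℝ) :
    M ω lam n x y
      = ∑ S ∈ (Icc 1 n).powerset, ((-lam) ^ S.card * ∏ i ∈ S, v ω i x y) • W n S := by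
  induction n with
  | zero => simp [M, W]
  | succ n ih =>
    have hn : n + 1 ∉ Icc 1 n := by simp
    rw [M, ih, A_eq_smul_E_add_J, ← insert_Icc_right_eq_Icc_add_one (by omega),
      sum_powerset_insert hn, add_mul, add_comm, mul_sum, mul_sum]
    congr 1 <;> refine sum_congr rfl fun S hS => ?_
    · have : n + 1 ∉ S := fun h => hn (mem_powerset.mp hS h)
      rw [W, if_neg this, Matrix.mul_smul]
    · have hS' : ∀ i ∈ S, i ≤ n := fun i hi => (mem_Icc.mp (mem_powerset.mp hS hi)).2
      have : n + 1 ∉ S := fun h => by have := hS' _ h; omega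
      rw [show W (n + 1) (insert (n + 1) S) = E * W n S by simpa using W_add_insert hS' 0,
        card_insert_of_notMem this, prod_insert this, Matrix.smul_mul, Matrix.mul_smul, smul_smul]
      congr 1
      ring

lemma P_eq_sum_powerset (ω : ℝ) (n : ℕ) (lam : ℝ) :
    P ω n lam = ∑ S ∈ (Icc 1 n).powerset, ∑ T ∈ (Icc 1 n).powerset,
      (-lam) ^ (S.card + T.card) * ((W n S)ᵀ * W n T).trace
        * ∫ x in (0 : ℝ)..1, ∫ y in (0 : ℝ)..1, (∏ i ∈ S, v ω i x y) * ∏ i ∈ T, v ω i x y := by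
  have htrace : ∀ x y, ((M ω lam n x y)ᵀ * M ω lam n x y).trace
      = ∑ p ∈ (Icc 1 n).powerset ×ˢ (Icc 1 n).powerset,
        (-lam) ^ (p.1.card + p.2.card) * ((W n p.1)ᵀ * W n p.2).trace
          * ((∏ i ∈ p.1, v ω i x y) * ∏ i ∈ p.2, v ω i x y) := fun x y => by
    rw [M_eq_sum_powerset, transpose_sum, sum_mul_sum, trace_sum, sum_product]
    refine sum_congr rfl fun S _ => ?_
    rw [trace_sum]
    refine sum_congr rfl fun T _ => ?_
    rw [transpose_smul, Matrix.smul_mul, Matrix.mul_smul, smul_smul, trace_smul, smul_eq_mul,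
      pow_add]
    ring
  rw [P]
  simp only [htrace]
  rw [intervalIntegral_intervalIntegral_sum_mul _ _ _ (fun p _ => by simp only [v]; fun_prop),
    sum_product]

lemma sum_powerset_sum_powerset_eq_sum_strictMono {R : Type*} [AddCommMonoid R] (n : ℕ)
    (F : Finset ℕ → Finset ℕ → R) :
    ∑ S ∈ (Icc 1 n).powerset, ∑ T ∈ (Icc 1 n).powerset, F S T
      = ∑ k₁ ∈ range (n + 1), ∑ k₂ ∈ range (n + 1),
          ∑ j ∈ Fintype.piFinset (fun _ : Fin k₁ => Icc 1 n),
            ∑ l ∈ Fintype.piFinset (fun _ : Fin k₂ => Icc 1 n),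
              if StrictMono j ∧ StrictMono l then F (univ.image j) (univ.image l) else 0 := by
  simp only [sum_powerset (Icc 1 n), Nat.card_Icc, add_tsub_cancel_right]
  refine sum_congr rfl fun k₁ _ => ?_
  rw [sum_comm]
  refine sum_congr rfl fun k₂ _ => ?_
  simp only [sum_powersetCard_eq_sum_strictMono, ite_and, sum_ite_irrel, sum_const_zero]

lemma P_eq_sum_tuples (ω : ℝ) (n : ℕ) (lam : ℝ) :
    P ω n lam = ∑ k₁ ∈ range (n + 1), ∑ k₂ ∈ range (n + 1),
      ∑ j ∈ Fintype.piFinset (fun _ : Fin k₁ => Icc 1 n),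
        ∑ l ∈ Fintype.piFinset (fun _ : Fin k₂ => Icc 1 n),
          if StrictMono j ∧ StrictMono l then
            (-lam) ^ (k₁ + k₂) * (traceCoeff n j l * vIntegral ω j l) else 0 := by
  rw [P_eq_sum_powerset, sum_powerset_sum_powerset_eq_sum_strictMono]
  refine sum_congr rfl fun k₁ _ => sum_congr rfl fun k₂ _ =>
    sum_congr rfl fun j _ => sum_congr rfl fun l _ => ?_
  split_ifs with h
  · rw [card_image_of_injective _ h.1.injective, card_image_of_injective _ h.2.injective,
      card_univ, card_univ, Fintype.card_fin, Fintype.card_fin, mul_assoc]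
    simp only [prod_image fun a _ b _ hab => h.1.injective hab,
      prod_image fun a _ b _ hab => h.2.injective hab]
    rfl
  · rfl

noncomputable def clubSum (ω : ℝ) (n k₁ k₂ : ℕ) : ℝ :=
  ∑ j ∈ Fintype.piFinset (fun _ : Fin k₁ => Icc 1 n),
    ∑ l ∈ Fintype.piFinset (fun _ : Fin k₂ => Icc 1 n),
      if StrictMono j ∧ StrictMono l ∧ club j l then vIntegral ω j l else 0

lemma clubSum_zero_zero (ω : ℝ) (n : ℕ) : clubSum ω n 0 0 = 1 := by
  simp [clubSum, vIntegral_zero_zero, Fintype.piFinset_of_isEmpty, Subsingleton.strictMono, club]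

lemma sum_neg_pow_traceCoeff_mul_vIntegral (ω lam : ℝ) (n k₁ k₂ : ℕ) :
    ∑ j ∈ Fintype.piFinset (fun _ : Fin k₁ => Icc 1 n),
      ∑ l ∈ Fintype.piFinset (fun _ : Fin k₂ => Icc 1 n),
        (if StrictMono j ∧ StrictMono l then
          (-lam) ^ (k₁ + k₂) * (traceCoeff n j l * vIntegral ω j l) else 0)
      = (if (4 : ℤ) ∣ (k₁ : ℤ) - k₂ then lam ^ (k₁ + k₂) * clubSum ω n k₁ k₂ else 0)
        + if k₁ = 0 ∧ k₂ = 0 then 1 else 0 := by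
  by_cases h₀ : k₁ = 0 ∧ k₂ = 0
  · obtain ⟨rfl, rfl⟩ := h₀
    simp [Fintype.piFinset_of_isEmpty, Subsingleton.strictMono, traceCoeff_zero_zero,
      vIntegral_zero_zero, clubSum_zero_zero]
    norm_num
  have hterm : ∀ j ∈ Fintype.piFinset (fun _ : Fin k₁ => Icc 1 n),
      ∀ l ∈ Fintype.piFinset (fun _ : Fin k₂ => Icc 1 n),
      (if StrictMono j ∧ StrictMono l then
        (-lam) ^ (k₁ + k₂) * (traceCoeff n j l * vIntegral ω j l) else 0)
        = if (4 : ℤ) ∣ (k₁ : ℤ) - k₂ then lam ^ (k₁ + k₂)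
            * (if StrictMono j ∧ StrictMono l ∧ club j l then vIntegral ω j l else 0) else 0 := by
    intro j hj l hl
    by_cases hmono : StrictMono j ∧ StrictMono l
    · rw [if_pos hmono, neg_pow_mul_traceCoeff_mul_vIntegral_eq_ite ω lam hmono.1 hmono.2
        (Fintype.mem_piFinset.mp hj) (Fintype.mem_piFinset.mp hl) (not_and_or.mp h₀)]
      by_cases hclub : club j l <;> simp [hmono, hclub]
    · have : ¬(StrictMono j ∧ StrictMono l ∧ club j l) := fun h => hmono ⟨h.1, h.2.1⟩
      simp [hmono, this]
  rw [sum_congr rfl fun j hj => sum_congr rfl fun l hl => hterm j hj l hl, if_neg h₀, add_zero,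
    clubSum]
  split_ifs <;> simp [mul_sum]

lemma P_eq_sum_clubSum (ω : ℝ) (n : ℕ) (lam : ℝ) :
    P ω n lam = (∑ k₁ ∈ range (n + 1), ∑ k₂ ∈ range (n + 1),
          if (4 : ℤ) ∣ (k₁ : ℤ) - k₂ then lam ^ (k₁ + k₂) * clubSum ω n k₁ k₂ else 0) + 1 := by
  simp only [P_eq_sum_tuples, sum_neg_pow_traceCoeff_mul_vIntegral, sum_add_distrib]
  congr 1
  simp [ite_and]

lemma alpha_eq (ω : ℝ) (n k : ℕ) :
    alpha ω n k = (∑ k₁ ∈ range (n + 1), ∑ k₂ ∈ range (n + 1),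
      if k₁ + k₂ = 2 * k ∧ (4 : ℤ) ∣ (k₁ : ℤ) - k₂ then clubSum ω n k₁ k₂ else 0)
        + if k = 0 then 1 else 0 := by
  rcases k with _ | k
  · simp [alpha, ite_and, clubSum_zero_zero]
    norm_num
  · simp only [alpha, if_neg (Nat.succ_ne_zero k), add_zero]
    rfl

lemma sum_alpha_mul_pow (ω lam : ℝ) (n : ℕ) :
    ∑ k ∈ range (n + 1), alpha ω n k * lam ^ (2 * k)
      = (∑ k₁ ∈ range (n + 1), ∑ k₂ ∈ range (n + 1),
          if (4 : ℤ) ∣ (k₁ : ℤ) - k₂ then lam ^ (k₁ + k₂) * clubSum ω n k₁ k₂ else 0) + 1 := by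
  simp only [alpha_eq, add_mul, sum_add_distrib, sum_mul, ite_mul, zero_mul, one_mul]
  congr 1
  · rw [sum_range_sum_sum_ite_add_eq_two_mul n (fun a b => (4 : ℤ) ∣ (a : ℤ) - b)
      (fun a b ⟨c, hc⟩ => ⟨(a + b) / 2, by omega⟩)]
    refine sum_congr rfl fun a _ => sum_congr rfl fun b _ => ?_
    split_ifs with h
    · obtain ⟨c, hc⟩ := h
      rw [mul_comm, show 2 * ((a + b) / 2) = a + b by omega]
    · rfl
  · simp

end SkewShift

theorem stmt_0_general (ω lam : ℝ) (n : ℕ) :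
    P ω n lam = ∑ k ∈ Finset.range (n + 1), alpha ω n k * lam ^ (2 * k) := by
  rw [SkewShift.P_eq_sum_clubSum, SkewShift.sum_alpha_mul_pow]

/-- `P_n(λ) = ∑_{k=0}^n α_{2k} λ^{2k}` with the coefficients `α_{2k}` above. -/
theorem stmt_0 (ω lam : ℝ) (n : ℕ) (hn : 1 ≤ n) :
    P ω n lam = ∑ k ∈ Finset.range (n + 1), alpha ω n k * lam ^ (2 * k) :=
  stmt_0_general ω lam n
end

section
/- For every ω ∈ ℝ, every λ ∈ ℝ and every integer n ≥ 1, there exist real numbers α_0, α_2, …, α_{2n} such that P_n(λ') = ∑_{k=0}^{n} α_{2k} (λ')^{2k} for all λ' ∈ ℝ, and moreover α_2 = 2n. -/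
open MeasureTheory Real
open scoped Matrix

open Polynomial Matrix

/-!
Replace `λ` by an indeterminate: the entries of `M_n` become polynomials of degree `≤ n` whose
coefficients depend continuously on `(x, y)`, so `P_n` is a polynomial of degree `≤ 2n` whose
`m`-th coefficient is the double integral of the `m`-th coefficient of `Tr (M_nᵀ M_n)`.

Since `v_j (x + 1/2, y) = -v_j (x, y)`, shifting `x` by `1/2` turns `λ` into `-λ`; the odd
coefficients are therefore antiperiodic in `x` and integrate to zero.

For the `λ²`-coefficient write `M_n = R^n + λ N₁ + λ² N₂ + ⋯`, `R` the rotation by a right angle.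
Passing from `n` to `n + 1` adds `v_{n+1}²` (a row of `R^n` has norm one) plus `v_{n+1}` times a
combination of entries of `N₁`, which lie in the span of `v_1, …, v_n`. As
`∫₀¹ v_j v_k dy = 2 δ_{jk}` for `j, k ≥ 1`, the `y`-integral of that coefficient grows by exactly
`2` at each step.
-/

theorem Matrix.natDegree_mul_apply_le {l m n : Type*} [Fintype m] {R : Type*} [Semiring R]
    {A : Matrix l m R[X]} {B : Matrix m n R[X]} {a b : ℕ}
    (hA : ∀ i k, (A i k).natDegree ≤ a) (hB : ∀ k j, (B k j).natDegree ≤ b) (i : l) (j : n) :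
    ((A * B) i j).natDegree ≤ a + b :=
  natDegree_sum_le_of_forall_le _ _ fun k _ => natDegree_mul_le_of_le (hA i k) (hB k j)

theorem Matrix.coeff_two_trace_transpose_mul_self {n : Type*} [Fintype n] {R : Type*}
    [CommSemiring R] (N : Matrix n n R[X]) :
    (trace (Nᵀ * N)).coeff 2 =
      ∑ i, ∑ k, (2 * (N k i).coeff 0 * (N k i).coeff 2 + (N k i).coeff 1 ^ 2) := by
  simp only [trace, diag, mul_apply, transpose_apply, finsetSum_coeff, coeff_mul,
    Finset.Nat.sum_antidiagonal_eq_sum_range_succ_mk, Finset.sum_range_succ,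
    Finset.sum_range_zero]
  congr! 2
  ring

def continuousCoeffs (Z R : Type*) [TopologicalSpace Z] [Ring R] [TopologicalSpace R]
    [IsTopologicalRing R] : Subring (Z → R[X]) where
  carrier := {F | ∀ k, Continuous fun z => (F z).coeff k}
  mul_mem' {F G} hF hG k := by
    simp only [Pi.mul_apply, coeff_mul]
    exact continuous_finsetSum _ fun p _ => (hF p.1).mul (hG p.2)
  one_mem' k := by simp only [Pi.one_apply, coeff_one]; exact continuous_const
  add_mem' hF hG k := by simpa only [Pi.add_apply, coeff_add] using (hF k).fun_add (hG k)
  zero_mem' k := by simpa using continuous_const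
  neg_mem' hF k := by simpa only [Pi.neg_apply, coeff_neg] using (hF k).fun_neg

section continuousCoeffs

variable {Z R : Type*} [TopologicalSpace Z] [Ring R] [TopologicalSpace R] [IsTopologicalRing R]

theorem const_mem_continuousCoeffs (p : R[X]) : (fun _ => p) ∈ continuousCoeffs Z R :=
  fun _ => continuous_const

theorem C_comp_mem_continuousCoeffs {f : Z → R} (hf : Continuous f) :
    (fun z => C (f z)) ∈ continuousCoeffs Z R := by
  intro k
  simp only [coeff_C]
  split_ifs
  · exact hf
  · exact continuous_const

end continuousCoeffs

theorem intervalIntegral_intervalIntegral_eval_eq_sum {F : ℝ → ℝ → ℝ[X]} {d : ℕ}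
    (hF : (fun q : ℝ × ℝ => F q.1 q.2) ∈ continuousCoeffs (ℝ × ℝ) ℝ)
    (hd : ∀ x y, (F x y).natDegree ≤ d) (a b c e t : ℝ) :
    ∫ x in a..b, ∫ y in c..e, (F x y).eval t =
      ∑ m ∈ Finset.range (d + 1), (∫ x in a..b, ∫ y in c..e, (F x y).coeff m) * t ^ m := by
  have hy : ∀ x m, Continuous fun y => (F x y).coeff m := fun x m =>
    (hF m).comp (Continuous.prodMk_right x)
  have hx : ∀ m, Continuous fun x => ∫ y in c..e, (F x y).coeff m := fun m =>
    intervalIntegral.continuous_parametric_intervalIntegral_of_continuous' (hF m) c e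
  have hinner : ∀ x, ∫ y in c..e, (F x y).eval t =
      ∑ m ∈ Finset.range (d + 1), (∫ y in c..e, (F x y).coeff m) * t ^ m := fun x => by
    simp_rw [fun y => eval_eq_sum_range' (Nat.lt_succ_of_le (hd x y)) t]
    rw [intervalIntegral.integral_finsetSum fun m _ =>
      ((hy x m).fun_mul continuous_const).intervalIntegrable c e]
    simp_rw [intervalIntegral.integral_mul_const]
  simp_rw [hinner]
  rw [intervalIntegral.integral_finsetSum fun m _ =>
    ((hx m).fun_mul continuous_const).intervalIntegrable a b]
  simp_rw [intervalIntegral.integral_mul_const]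

theorem Function.Antiperiodic.intervalIntegral_zero_two_mul_eq_zero {g : ℝ → ℝ} {c : ℝ}
    (hg : Function.Antiperiodic g c) (hcont : Continuous g) :
    ∫ x in (0 : ℝ)..2 * c, g x = 0 := by
  have hshift : ∫ x in c..2 * c, g x = -∫ x in (0 : ℝ)..c, g x := by
    have h := intervalIntegral.integral_comp_add_right g (a := 0) (b := c) c
    rw [zero_add, ← two_mul] at h
    rw [← h, ← intervalIntegral.integral_neg]
    exact intervalIntegral.integral_congr fun x _ => hg x
  rw [← intervalIntegral.integral_add_adjacent_intervals (b := c)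
    (hcont.intervalIntegrable _ _) (hcont.intervalIntegrable _ _), hshift, add_neg_cancel]

theorem integral_cos_two_pi_mul_int_mul_add {m : ℤ} (hm : m ≠ 0) (c : ℝ) :
    ∫ y in (0 : ℝ)..1, cos (2 * π * (m * y + c)) = 0 := by
  have hk : 2 * π * m ≠ 0 := by positivity
  simp_rw [mul_add, ← mul_assoc]
  rw [intervalIntegral.integral_comp_mul_add (fun y => cos y) hk, integral_cos, mul_one, mul_zero,
    zero_add, add_comm, mul_comm (2 * π), sin_add_int_mul_two_pi, sub_self, smul_zero]

theorem Finset.sum_range_two_mul_add_one_of_odd {M : Type*} [AddCommMonoid M] {f : ℕ → M}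
    (hf : ∀ m, Odd m → f m = 0) (n : ℕ) :
    ∑ m ∈ range (2 * n + 1), f m = ∑ k ∈ range (n + 1), f (2 * k) := by
  induction n with
  | zero => simp
  | succ n ih =>
    rw [show 2 * (n + 1) + 1 = 2 * n + 1 + 1 + 1 by ring, sum_range_succ, sum_range_succ, ih,
      hf _ (odd_two_mul_add_one n), add_zero, sum_range_succ (n := n + 1), mul_add_one]

def integralPerp (w : ℝ → ℝ) : Submodule ℝ (ℝ → ℝ) where
  carrier := {g | IntervalIntegrable (fun y => w y * g y) volume 0 1 ∧
    ∫ y in (0 : ℝ)..1, w y * g y = 0}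
  add_mem' {f g} hf hg := by
    simp only [Set.mem_ofPred_eq, Pi.add_apply, mul_add] at *
    exact ⟨hf.1.add hg.1, by rw [intervalIntegral.integral_add hf.1 hg.1, hf.2, hg.2, add_zero]⟩
  zero_mem' := by simp
  smul_mem' a g hg := by
    simp only [Set.mem_ofPred_eq, Pi.smul_apply, smul_eq_mul, mul_left_comm _ a] at *
    exact ⟨hg.1.const_mul a, by rw [intervalIntegral.integral_const_mul, hg.2, mul_zero]⟩

theorem mem_integralPerp_of_continuous {w g : ℝ → ℝ} (hw : Continuous w) (hg : Continuous g)
    (h : ∫ y in (0 : ℝ)..1, w y * g y = 0) : g ∈ integralPerp w :=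
  ⟨(hw.mul hg).intervalIntegrable 0 1, h⟩

def rot90 : Matrix (Fin 2) (Fin 2) ℝ := !![0, -1; 1, 0]

theorem sum_rot90_pow_apply_sq (n : ℕ) (i : Fin 2) : ∑ j, (rot90 ^ n) i j ^ 2 = 1 := by
  have hrot : rot90 ∈ orthogonalGroup (Fin 2) ℝ := by
    rw [mem_orthogonalGroup_iff]
    ext a b
    fin_cases a <;> fin_cases b <;> simp [rot90, Matrix.mul_apply]
  have h := congrFun (congrFun ((mem_orthogonalGroup_iff (Fin 2) ℝ).mp (pow_mem hrot n)) i) i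
  simpa [Matrix.mul_apply, sq, -transpose_pow] using h

section SkewShift

variable (ω : ℝ)

theorem continuous_v_uncurry (j : ℕ) : Continuous fun q : ℝ × ℝ => v ω j q.1 q.2 := by
  unfold v; fun_prop

theorem continuous_v (j : ℕ) (x : ℝ) : Continuous (v ω j x) := by
  unfold v; fun_prop

theorem v_add_half (j : ℕ) (x y : ℝ) : v ω j (x + 1 / 2) y = -v ω j x y := by
  unfold v
  rw [show 2 * π * (j * (j - 1) / 2 * ω + j * y + (x + 1 / 2)) =
      2 * π * (j * (j - 1) / 2 * ω + j * y + x) + π by ring, cos_add_pi]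
  ring

/-- Product to sum: only the difference frequency `j - k` survives integration in `y`. -/
theorem integral_v_mul_v_eq {j k : ℕ} (hjk : j + k ≠ 0) (x : ℝ) :
    ∫ y in (0 : ℝ)..1, v ω j x y * v ω k x y =
      2 * ∫ y in (0 : ℝ)..1,
        cos (2 * π * (((j - k : ℤ) : ℝ) * y + (j * (j - 1) / 2 - k * (k - 1) / 2) * ω)) := by
  have hsum : ∀ y, v ω j x y * v ω k x y =
      2 * cos (2 * π * (((j - k : ℤ) : ℝ) * y + (j * (j - 1) / 2 - k * (k - 1) / 2) * ω)) +
      2 * cos (2 * π * (((j + k : ℤ) : ℝ) * y +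
        ((j * (j - 1) / 2 + k * (k - 1) / 2) * ω + 2 * x))) := by
    intro y
    have h2cos : ∀ a b : ℝ, 2 * cos a * (2 * cos b) = 2 * cos (a - b) + 2 * cos (a + b) :=
      fun a b => by rw [cos_sub, cos_add]; ring
    unfold v
    rw [h2cos]
    congr 3 <;> push_cast <;> ring
  simp_rw [hsum]
  rw [intervalIntegral.integral_add (Continuous.intervalIntegrable (by fun_prop) 0 1)
      (Continuous.intervalIntegrable (by fun_prop) 0 1),
    intervalIntegral.integral_const_mul, intervalIntegral.integral_const_mul,
    integral_cos_two_pi_mul_int_mul_add (m := j + k) (by omega), mul_zero, add_zero]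

theorem integral_v_mul_v_of_ne {j k : ℕ} (hjk : j ≠ k) (x : ℝ) :
    ∫ y in (0 : ℝ)..1, v ω j x y * v ω k x y = 0 := by
  rw [integral_v_mul_v_eq ω (by omega), integral_cos_two_pi_mul_int_mul_add (by omega), mul_zero]

theorem integral_v_mul_self {j : ℕ} (hj : j ≠ 0) (x : ℝ) :
    ∫ y in (0 : ℝ)..1, v ω j x y * v ω j x y = 2 := by
  simp [integral_v_mul_v_eq ω (j := j) (k := j) (by omega)]

noncomputable def polyA (j : ℕ) (x y : ℝ) : Matrix (Fin 2) (Fin 2) ℝ[X] :=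
  !![-(C (v ω j x y) * X), -1; 1, 0]

noncomputable def polyM : ℕ → ℝ → ℝ → Matrix (Fin 2) (Fin 2) ℝ[X]
  | 0, _, _ => 1
  | n + 1, x, y => polyA ω (n + 1) x y * polyM n x y

noncomputable def polyTrace (n : ℕ) (x y : ℝ) : ℝ[X] :=
  trace ((polyM ω n x y)ᵀ * polyM ω n x y)

theorem polyM_succ_apply_zero (n : ℕ) (x y : ℝ) (j : Fin 2) :
    polyM ω (n + 1) x y 0 j =
      -(C (v ω (n + 1) x y) * X * polyM ω n x y 0 j) - polyM ω n x y 1 j := by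
  simp [polyM, polyA, Matrix.mul_apply, sub_eq_add_neg]

theorem polyM_succ_apply_one (n : ℕ) (x y : ℝ) (j : Fin 2) :
    polyM ω (n + 1) x y 1 j = polyM ω n x y 0 j := by
  simp [polyM, polyA, Matrix.mul_apply]

theorem map_eval_polyA (lam : ℝ) (j : ℕ) (x y : ℝ) :
    (polyA ω j x y).map (eval lam) = A ω lam j x y := by
  ext i k
  fin_cases i <;> fin_cases k <;> simp [polyA, A, mul_comm lam]

theorem map_eval_polyM (lam : ℝ) (n : ℕ) (x y : ℝ) :
    (polyM ω n x y).map (eval lam) = M ω lam n x y := by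
  induction n with
  | zero => simp [polyM, M]
  | succ n ih =>
    rw [polyM, M, ← coe_evalRingHom, Matrix.map_mul, coe_evalRingHom, map_eval_polyA, ih]

theorem trace_transpose_mul_M (lam : ℝ) (n : ℕ) (x y : ℝ) :
    trace ((M ω lam n x y)ᵀ * M ω lam n x y) = (polyTrace ω n x y).eval lam := by
  rw [polyTrace, ← coe_evalRingHom, AddMonoidHom.map_trace, Matrix.map_mul, transpose_map,
    coe_evalRingHom, map_eval_polyM]

theorem natDegree_polyM_apply_le (n : ℕ) (x y : ℝ) (i j : Fin 2) :
    (polyM ω n x y i j).natDegree ≤ n := by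
  induction n generalizing i j with
  | zero => rw [polyM, one_apply]; split_ifs <;> simp
  | succ n ih =>
    refine (Matrix.natDegree_mul_apply_le (a := 1) (fun i k => ?_) ih i j).trans_eq (add_comm 1 n)
    fin_cases i <;> fin_cases k <;> simp [polyA, (natDegree_C_mul_le _ X).trans natDegree_X_le]

theorem natDegree_polyTrace_le (n : ℕ) (x y : ℝ) : (polyTrace ω n x y).natDegree ≤ 2 * n := by
  rw [polyTrace, trace, two_mul]
  exact natDegree_sum_le_of_forall_le _ _ fun i _ =>
    Matrix.natDegree_mul_apply_le (fun _ _ => natDegree_polyM_apply_le ω n x y _ _)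
      (natDegree_polyM_apply_le ω n x y) i i

theorem polyM_apply_mem_continuousCoeffs (n : ℕ) (i j : Fin 2) :
    (fun q : ℝ × ℝ => polyM ω n q.1 q.2 i j) ∈ continuousCoeffs (ℝ × ℝ) ℝ := by
  induction n generalizing i j with
  | zero =>
    simp only [polyM, one_apply]
    exact const_mem_continuousCoeffs _
  | succ n ih =>
    match i with
    | 0 =>
      simp only [polyM_succ_apply_zero]
      exact sub_mem (neg_mem (mul_mem (mul_mem (C_comp_mem_continuousCoeffs
        (continuous_v_uncurry ω _)) (const_mem_continuousCoeffs X)) (ih 0 j))) (ih 1 j)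
    | 1 => simpa only [polyM_succ_apply_one] using ih 0 j

theorem polyTrace_mem_continuousCoeffs (n : ℕ) :
    (fun q : ℝ × ℝ => polyTrace ω n q.1 q.2) ∈ continuousCoeffs (ℝ × ℝ) ℝ := by
  have h : (fun q : ℝ × ℝ => polyTrace ω n q.1 q.2) =
      ∑ i, ∑ k, (fun q : ℝ × ℝ => polyM ω n q.1 q.2 k i) * fun q => polyM ω n q.1 q.2 k i := by
    ext q : 1
    simp [polyTrace, trace, mul_apply, Finset.sum_apply]
  rw [h]
  exact sum_mem fun i _ => sum_mem fun k _ => mul_mem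
    (polyM_apply_mem_continuousCoeffs ω n k i) (polyM_apply_mem_continuousCoeffs ω n k i)

theorem continuous_coeff_polyTrace (n m : ℕ) (x : ℝ) :
    Continuous fun y => (polyTrace ω n x y).coeff m := by
  have h : Continuous fun q : ℝ × ℝ => (polyTrace ω n q.1 q.2).coeff m :=
    polyTrace_mem_continuousCoeffs ω n m
  exact (h.comp (Continuous.prodMk_right x) :)

theorem polyA_add_half (j : ℕ) (x y : ℝ) :
    polyA ω j (x + 1 / 2) y = (polyA ω j x y).map (compRingHom (C (-1) * X)) := by
  rw [polyA, polyA, v_add_half]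
  ext i k
  fin_cases i <;> fin_cases k <;> simp

theorem polyM_add_half (n : ℕ) (x y : ℝ) :
    polyM ω n (x + 1 / 2) y = (polyM ω n x y).map (compRingHom (C (-1) * X)) := by
  induction n with
  | zero => simp [polyM]
  | succ n ih => rw [polyM, polyM, Matrix.map_mul, polyA_add_half, ih]

theorem coeff_polyTrace_add_half (n m : ℕ) (x y : ℝ) :
    (polyTrace ω n (x + 1 / 2) y).coeff m = (-1) ^ m * (polyTrace ω n x y).coeff m := by
  rw [polyTrace, polyTrace, polyM_add_half, ← transpose_map, ← Matrix.map_mul,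
    ← AddMonoidHom.map_trace, coe_compRingHom_apply, comp_C_mul_X_coeff, mul_comm]

theorem integral_coeff_polyTrace_of_odd (n : ℕ) {m : ℕ} (hm : Odd m) :
    ∫ x in (0 : ℝ)..1, ∫ y in (0 : ℝ)..1, (polyTrace ω n x y).coeff m = 0 := by
  have hanti : Function.Antiperiodic (fun x => ∫ y in (0 : ℝ)..1, (polyTrace ω n x y).coeff m)
      (1 / 2) := fun x => by
    simp_rw [coeff_polyTrace_add_half, hm.neg_one_pow, neg_one_mul, intervalIntegral.integral_neg]
  have hcont : Continuous fun x => ∫ y in (0 : ℝ)..1, (polyTrace ω n x y).coeff m :=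
    intervalIntegral.continuous_parametric_intervalIntegral_of_continuous'
      (polyTrace_mem_continuousCoeffs ω n m) 0 1
  simpa using hanti.intervalIntegral_zero_two_mul_eq_zero hcont

theorem M_zero_eq_rot90_pow (n : ℕ) (x y : ℝ) : M ω 0 n x y = rot90 ^ n := by
  induction n with
  | zero => rfl
  | succ n ih =>
    rw [M, ih, pow_succ']
    congr 1
    ext i k
    fin_cases i <;> fin_cases k <;> simp [A, rot90]

theorem coeff_zero_polyM (n : ℕ) (x y : ℝ) (i j : Fin 2) :
    (polyM ω n x y i j).coeff 0 = (rot90 ^ n) i j := by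
  rw [coeff_zero_eq_eval_zero, ← Matrix.map_apply (f := eval 0), map_eval_polyM,
    M_zero_eq_rot90_pow]

theorem coeff_one_polyM_mem_integralPerp {n m : ℕ} (hnm : n < m) (x : ℝ) (i j : Fin 2) :
    (fun y => (polyM ω n x y i j).coeff 1) ∈ integralPerp (v ω m x) := by
  induction n generalizing i j with
  | zero =>
    convert (integralPerp (v ω m x)).zero_mem using 1
    ext y
    rcases eq_or_ne i j with rfl | hij <;> simp [polyM, one_apply, coeff_one, *]
  | succ n ih =>
    match i with
    | 0 =>
      have h : (fun y => (polyM ω (n + 1) x y 0 j).coeff 1) =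
          -((rot90 ^ n) 0 j • v ω (n + 1) x) - fun y => (polyM ω n x y 1 j).coeff 1 := by
        ext y
        simp [polyM_succ_apply_zero, mul_assoc, coeff_zero_polyM, mul_comm (v ω (n + 1) x y)]
      have hv : v ω (n + 1) x ∈ integralPerp (v ω m x) :=
        mem_integralPerp_of_continuous (continuous_v ω m x) (continuous_v ω (n + 1) x)
          (integral_v_mul_v_of_ne ω (by omega) x)
      rw [h]
      exact sub_mem (neg_mem (Submodule.smul_mem _ _ hv)) (ih (by omega) 1 j)
    | 1 => simpa only [polyM_succ_apply_one] using ih (by omega) 0 j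

noncomputable def crossTerm (n : ℕ) (x y : ℝ) : ℝ :=
  ∑ j, ((rot90 ^ n) 1 j * (polyM ω n x y 0 j).coeff 1 +
    (rot90 ^ n) 0 j * (polyM ω n x y 1 j).coeff 1)

theorem crossTerm_mem_integralPerp (n : ℕ) (x : ℝ) :
    crossTerm ω n x ∈ integralPerp (v ω (n + 1) x) := by
  have h : crossTerm ω n x = ∑ j, ((rot90 ^ n) 1 j • (fun y => (polyM ω n x y 0 j).coeff 1) +
      (rot90 ^ n) 0 j • fun y => (polyM ω n x y 1 j).coeff 1) := by
    ext y
    simp [crossTerm, Finset.sum_apply]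
  rw [h]
  exact sum_mem fun j _ => add_mem
    (Submodule.smul_mem _ _ (coeff_one_polyM_mem_integralPerp ω n.lt_succ_self x 0 j))
    (Submodule.smul_mem _ _ (coeff_one_polyM_mem_integralPerp ω n.lt_succ_self x 1 j))

theorem coeff_two_polyTrace_succ (n : ℕ) (x y : ℝ) :
    (polyTrace ω (n + 1) x y).coeff 2 = (polyTrace ω n x y).coeff 2 +
      v ω (n + 1) x y * v ω (n + 1) x y + 2 * (v ω (n + 1) x y * crossTerm ω n x y) := by
  have hrow := sum_rot90_pow_apply_sq n 0
  simp only [Fin.sum_univ_two] at hrow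
  simp only [polyTrace, crossTerm, coeff_two_trace_transpose_mul_self, Fin.sum_univ_two,
    polyM_succ_apply_zero, polyM_succ_apply_one]
  simp only [coeff_sub, coeff_neg, mul_assoc, coeff_C_mul, coeff_X_mul, coeff_X_mul_zero,
    coeff_zero_polyM]
  linear_combination v ω (n + 1) x y * v ω (n + 1) x y * hrow

theorem integral_coeff_two_polyTrace (n : ℕ) (x : ℝ) :
    ∫ y in (0 : ℝ)..1, (polyTrace ω n x y).coeff 2 = 2 * n := by
  induction n with
  | zero => simp [polyTrace, polyM]
  | succ n ih =>
    have hcross := crossTerm_mem_integralPerp ω n x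
    have hv := continuous_v ω (n + 1) x
    simp_rw [coeff_two_polyTrace_succ]
    rw [intervalIntegral.integral_add
        (((continuous_coeff_polyTrace ω n 2 x).fun_add (hv.fun_mul hv)).intervalIntegrable 0 1)
        (hcross.1.const_mul 2),
      intervalIntegral.integral_add ((continuous_coeff_polyTrace ω n 2 x).intervalIntegrable 0 1)
        ((hv.fun_mul hv).intervalIntegrable 0 1),
      intervalIntegral.integral_const_mul, hcross.2, ih, integral_v_mul_self ω n.succ_ne_zero]
    push_cast
    ring

end SkewShift

theorem stmt_1_general (ω : ℝ) (n : ℕ) :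
    ∃ α : ℕ → ℝ,
      (∀ lam' : ℝ, P ω n lam' = ∑ k ∈ Finset.range (n + 1), α k * lam' ^ (2 * k)) ∧
      α 1 = 2 * n := by
  refine ⟨fun k => ∫ x in (0 : ℝ)..1, ∫ y in (0 : ℝ)..1, (polyTrace ω n x y).coeff (2 * k),
    fun lam => ?_, ?_⟩
  · simp_rw [P, trace_transpose_mul_M]
    rw [intervalIntegral_intervalIntegral_eval_eq_sum (polyTrace_mem_continuousCoeffs ω n)
      (natDegree_polyTrace_le ω n), Finset.sum_range_two_mul_add_one_of_odd]
    intro m hm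
    rw [integral_coeff_polyTrace_of_odd ω n hm, zero_mul]
  · simp [integral_coeff_two_polyTrace]

/-- `P_n` is an even polynomial of degree `2n` in `λ`, with `λ²`-coefficient `α₂ = 2n`. -/
theorem stmt_1 (ω : ℝ) (n : ℕ) (hn : 1 ≤ n) :
    ∃ α : ℕ → ℝ,
      (∀ lam' : ℝ, P ω n lam' = ∑ k ∈ Finset.range (n + 1), α k * lam' ^ (2 * k)) ∧
      α 1 = 2 * n :=
  stmt_1_general ω n
end

section
/- For every ω ∈ ℝ and every integer n ≥ 1, the following integral vanishes: ∫₀¹∫₀¹ ∑_{1≤j₁<j₂<j₃≤n} [ 1{j₁,j₂ even, j₃ odd}·v_{j₁}v_{j₂}v_{j₃}² + 1{j₁ even, j₂,j₃ odd}·v_{j₁}²v_{j₂}v_{j₃} + 1{j₁,j₂ odd, j₃ even}·v_{j₁}v_{j₂}v_{j₃}² + 1{j₁ odd, j₂,j₃ even}·v_{j₁}²v_{j₂}v_{j₃} ](x,y) dx dy = 0. -/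
open MeasureTheory Real

/-!
Write `v_j = 2 cos θ_j` with `θ_j = a_j + 2π(x + j y)`. Product-to-sum turns `v_i v_j v_l²` into a
combination of `cos(θ_i ± θ_j ± 2θ_l)` and `cos(θ_i ± θ_j)`, each the cosine of an affine phase with
integer frequencies `(k, m)` in `(x, y)`. Such a cosine integrates to zero over `[0,1]²` unless
`k = m = 0`, and the only terms with `k = 0` have `m = i + j - 2l` or `m = i - j`. Hence for
`j₁ < j₂ < j₃` both `v_{j₁} v_{j₂} v_{j₃}²` and `v_{j₁}² v_{j₂} v_{j₃} = v_{j₂} v_{j₃} v_{j₁}²` have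
mean zero, whatever the parities of the indices.
-/

open Function

lemma integral_cos_add_two_pi_int_mul {m : ℤ} (hm : m ≠ 0) (b : ℝ) :
    ∫ y in (0:ℝ)..1, cos (b + 2 * π * (m * y)) = 0 := by
  have hc : (2 * π * m : ℝ) ≠ 0 := by positivity
  have hperiod : sin (2 * π * m + b) = sin b := by
    simpa [mul_comm, add_comm] using sin_add_int_mul_two_pi b m
  simp only [← mul_assoc, add_comm b, intervalIntegral.integral_comp_mul_add cos hc, integral_cos,
    mul_one, mul_zero, zero_add, hperiod, sub_self, smul_zero]

def MeanZero (F : ℝ → ℝ → ℝ) : Prop :=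
  Continuous (uncurry F) ∧ ∫ x in (0:ℝ)..1, ∫ y in (0:ℝ)..1, F x y = 0

namespace MeanZero

lemma zero : MeanZero fun _ _ => 0 := ⟨continuous_const, by simp⟩

lemma add {F G : ℝ → ℝ → ℝ} (hF : MeanZero F) (hG : MeanZero G) :
    MeanZero fun x y => F x y + G x y := by
  refine ⟨hF.1.add hG.1, ?_⟩
  have hin {H : ℝ → ℝ → ℝ} (hH : Continuous (uncurry H)) (x : ℝ) :
      IntervalIntegrable (H x) volume 0 1 :=
    (hH.comp (Continuous.prodMk_right x)).intervalIntegrable 0 1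
  have hout {H : ℝ → ℝ → ℝ} (hH : Continuous (uncurry H)) :
      IntervalIntegrable (fun x => ∫ y in (0:ℝ)..1, H x y) volume 0 1 :=
    (intervalIntegral.continuous_parametric_intervalIntegral_of_continuous' hH 0 1).intervalIntegrable
      0 1
  rw [intervalIntegral.integral_congr fun x _ =>
      intervalIntegral.integral_add (hin hF.1 x) (hin hG.1 x),
    intervalIntegral.integral_add (hout hF.1) (hout hG.1), hF.2, hG.2, add_zero]

lemma const_mul {F : ℝ → ℝ → ℝ} (hF : MeanZero F) (c : ℝ) : MeanZero fun x y => c * F x y :=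
  ⟨continuous_const.mul hF.1, by simp [hF.2]⟩

lemma ite {p : Prop} [Decidable p] {F : ℝ → ℝ → ℝ} (hF : p → MeanZero F) :
    MeanZero fun x y => if p then F x y else 0 := by
  by_cases hp : p
  · simpa only [hp, if_true] using hF hp
  · simpa only [hp, if_false] using zero

lemma sum {ι : Type*} (s : Finset ι) {F : ι → ℝ → ℝ → ℝ} (hF : ∀ i ∈ s, MeanZero (F i)) :
    MeanZero fun x y => ∑ i ∈ s, F i x y := by
  classical
  induction s using Finset.induction_on with
  | empty => simpa using zero
  | insert i s hi ih =>
    simp only [Finset.sum_insert hi]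
    exact (hF i (Finset.mem_insert_self i s)).add
      (ih fun j hj => hF j (Finset.mem_insert_of_mem hj))

end MeanZero

noncomputable def linPhase (a : ℝ) (k m : ℤ) (x y : ℝ) : ℝ := a + 2 * π * (k * x + m * y)

lemma linPhase_add (a a' : ℝ) (k k' m m' : ℤ) (x y : ℝ) :
    linPhase a k m x y + linPhase a' k' m' x y = linPhase (a + a') (k + k') (m + m') x y := by
  simp only [linPhase]; push_cast; ring

lemma linPhase_sub (a a' : ℝ) (k k' m m' : ℤ) (x y : ℝ) :
    linPhase a k m x y - linPhase a' k' m' x y = linPhase (a - a') (k - k') (m - m') x y := by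
  simp only [linPhase]; push_cast; ring

lemma meanZero_cos_linPhase (a : ℝ) {k m : ℤ} (h : k ≠ 0 ∨ m ≠ 0) :
    MeanZero fun x y => cos (linPhase a k m x y) := by
  refine ⟨by unfold linPhase; fun_prop, ?_⟩
  rcases eq_or_ne m 0 with rfl | hm
  · have hk : k ≠ 0 := h.resolve_right (not_not.2 rfl)
    simpa [linPhase, mul_add] using integral_cos_add_two_pi_int_mul hk a
  · simp only [linPhase, mul_add, ← add_assoc, integral_cos_add_two_pi_int_mul hm,
      intervalIntegral.integral_zero]

lemma v_eq_cos_linPhase (ω : ℝ) (j : ℕ) (x y : ℝ) :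
    v ω j x y = 2 * cos (linPhase (2 * π * ((j : ℝ) * ((j : ℝ) - 1) / 2 * ω)) 1 j x y) := by
  simp only [v, linPhase]; push_cast; ring_nf

lemma two_cos_mul_two_cos_mul_two_cos_sq (A B C : ℝ) :
    (2 * cos A) * (2 * cos B) * (2 * cos C) ^ 2 =
      2 * cos (A + B + (C + C)) + 2 * cos (A + B - (C + C)) + 2 * cos (A - B + (C + C))
        + 2 * cos (A - B - (C + C)) + 4 * cos (A + B) + 4 * cos (A - B) := by
  simp only [cos_add, cos_sub, sin_add, sin_sub]
  linear_combination (8 * cos A * cos B) * sin_sq_add_cos_sq C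

lemma meanZero_v_mul_v_mul_v_sq (ω : ℝ) {i j l : ℕ} (hij : i ≠ j) (hl : i + j ≠ 2 * l) :
    MeanZero fun x y => v ω i x y * v ω j x y * v ω l x y ^ 2 := by
  simp only [v_eq_cos_linPhase, two_cos_mul_two_cos_mul_two_cos_sq, linPhase_add, linPhase_sub]
  refine .add (.add (.add (.add (.add ?_ ?_) ?_) ?_) ?_) ?_ <;>
    exact .const_mul (meanZero_cos_linPhase _ (by omega)) _

theorem stmt_4_general (ω : ℝ) (n : ℕ) :
    (∫ x in (0:ℝ)..1, ∫ y in (0:ℝ)..1,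
      ∑ j₁ ∈ Finset.Icc 1 n, ∑ j₂ ∈ Finset.Icc 1 n, ∑ j₃ ∈ Finset.Icc 1 n,
        if j₁ < j₂ ∧ j₂ < j₃ then
          (if Even j₁ ∧ Even j₂ ∧ Odd j₃ then
              v ω j₁ x y * v ω j₂ x y * (v ω j₃ x y) ^ 2 else 0)
          + (if Even j₁ ∧ Odd j₂ ∧ Odd j₃ then
              (v ω j₁ x y) ^ 2 * v ω j₂ x y * v ω j₃ x y else 0)
          + (if Odd j₁ ∧ Odd j₂ ∧ Even j₃ then
              v ω j₁ x y * v ω j₂ x y * (v ω j₃ x y) ^ 2 else 0)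
          + (if Odd j₁ ∧ Even j₂ ∧ Even j₃ then
              (v ω j₁ x y) ^ 2 * v ω j₂ x y * v ω j₃ x y else 0)
        else 0) = 0 := by
  refine (MeanZero.sum _ fun j₁ _ => MeanZero.sum _ fun j₂ _ => MeanZero.sum _ fun j₃ _ =>
    MeanZero.ite fun ⟨h₁₂, h₂₃⟩ => ?_).2
  have hA := meanZero_v_mul_v_mul_v_sq ω (i := j₁) (j := j₂) (l := j₃) (by omega) (by omega)
  have hB : MeanZero fun x y => v ω j₁ x y ^ 2 * v ω j₂ x y * v ω j₃ x y := by
    simpa only [mul_comm, mul_left_comm, mul_assoc] using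
      meanZero_v_mul_v_mul_v_sq ω (i := j₂) (j := j₃) (l := j₁) (by omega) (by omega)
  exact (((MeanZero.ite fun _ => hA).add (.ite fun _ => hB)).add (.ite fun _ => hA)).add
    (.ite fun _ => hB)

/-- The mixed third/first power parity terms integrate to zero:
`∫₀¹∫₀¹ ∑_{1≤j₁<j₂<j₃≤n} [1{eeo}·v_{j₁}v_{j₂}v_{j₃}² + 1{eoo}·v_{j₁}²v_{j₂}v_{j₃}
  + 1{ooe}·v_{j₁}v_{j₂}v_{j₃}² + 1{oee}·v_{j₁}²v_{j₂}v_{j₃}] dx dy = 0`. -/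
theorem stmt_4 (ω : ℝ) (n : ℕ) (hn : 1 ≤ n) :
    (∫ x in (0:ℝ)..1, ∫ y in (0:ℝ)..1,
      ∑ j₁ ∈ Finset.Icc 1 n, ∑ j₂ ∈ Finset.Icc 1 n, ∑ j₃ ∈ Finset.Icc 1 n,
        if j₁ < j₂ ∧ j₂ < j₃ then
          (if Even j₁ ∧ Even j₂ ∧ Odd j₃ then
              v ω j₁ x y * v ω j₂ x y * (v ω j₃ x y) ^ 2 else 0)
          + (if Even j₁ ∧ Odd j₂ ∧ Odd j₃ then
              (v ω j₁ x y) ^ 2 * v ω j₂ x y * v ω j₃ x y else 0)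
          + (if Odd j₁ ∧ Odd j₂ ∧ Even j₃ then
              v ω j₁ x y * v ω j₂ x y * (v ω j₃ x y) ^ 2 else 0)
          + (if Odd j₁ ∧ Even j₂ ∧ Even j₃ then
              (v ω j₁ x y) ^ 2 * v ω j₂ x y * v ω j₃ x y else 0)
        else 0) = 0 :=
  stmt_4_general ω n
end

section
/- For every ω ∈ ℝ, every integer k ≥ 1 and all positive integers j₁, …, j_k, one has ∫₀¹∫₀¹ ∏_{s=1}^{k} v_{j_s}(x,y) dx dy = Re ∑_{a} exp(πi·ω·∑_{s=1}^{k} a_s j_s²), where the sum ranges over all vectors a = (a₁,…,a_k) ∈ {−1, +1}^k satisfying ∑_{s=1}^{k} a_s = 0 and ∑_{s=1}^{k} a_s j_s = 0. -/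
/-!
Writing `2 cos(2πθ) = e(θ) + e(-θ)` with `e(t) = exp(2πit)` and expanding the product turns the
integrand into a sum over sign vectors `a` of characters `e(c_a + (∑ a_s) x + (∑ a_s j_s) y)`.
Integrating over the unit square keeps exactly the terms with `∑ a_s = ∑ a_s j_s = 0`, and for
those the phase `c_a = ω ∑ a_s j_s (j_s - 1) / 2` equals `ω/2 ∑ a_s j_s²`.
-/

open MeasureTheory Real

open Complex

lemma integral_exp_two_pi_I_mul_add_int_mul (c : ℂ) (n : ℤ) :
    ∫ x in (0:ℝ)..1, exp (2 * π * I * (c + n * x)) = if n = 0 then exp (2 * π * I * c) else 0 := by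
  split_ifs with hn
  · simp [hn]
  · have hc : 2 * π * I * n ≠ 0 := by simp [pi_ne_zero, hn]
    have hsplit : ∀ x : ℝ,
        exp (2 * π * I * (c + n * x)) = exp (2 * π * I * c) * exp (2 * π * I * n * x) := by
      intro x; rw [← Complex.exp_add]; ring_nf
    simp only [hsplit, intervalIntegral.integral_const_mul, integral_exp_mul_complex hc]
    have hper : exp (2 * π * I * n) = 1 := by
      rw [← exp_int_mul_two_pi_mul_I n]; ring_nf
    simp [hper]

lemma prod_two_cos_eq_re_sum_exp {ι : Type*} [Fintype ι] [DecidableEq ι] (θ : ι → ℝ) :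
    ∏ s, 2 * Real.cos (2 * π * θ s) =
      (∑ a ∈ Fintype.piFinset fun _ : ι => ({-1, 1} : Finset ℤ),
        exp (2 * π * I * ∑ s, (a s : ℂ) * θ s)).re := by
  have htwo_cos : ∀ t : ℝ, ((2 * Real.cos (2 * π * t) : ℝ) : ℂ) =
      ∑ a ∈ ({-1, 1} : Finset ℤ), exp (2 * π * I * (a * t)) := by
    intro t
    rw [Finset.sum_pair (by decide)]
    push_cast
    rw [two_cos, add_comm]
    ring_nf
  rw [← ofReal_re (∏ s, _), ofReal_prod]
  simp only [htwo_cos, Finset.prod_univ_sum, ← Complex.exp_sum, Finset.mul_sum]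

lemma intervalIntegral_re_sum {ι : Type*} (A : Finset ι) (f : ι → ℝ → ℂ) {a b : ℝ}
    (hf : ∀ i ∈ A, IntervalIntegrable (f i) volume a b) :
    ∫ x in a..b, (∑ i ∈ A, f i x).re = (∑ i ∈ A, ∫ x in a..b, f i x).re := by
  rw [← intervalIntegral.integral_finsetSum hf]
  simpa only [Finset.sum_apply, RCLike.re_to_complex] using
    intervalIntegral.intervalIntegral_re (IntervalIntegrable.sum A hf)

lemma intervalIntegral_intervalIntegral_re_sum {ι : Type*} (A : Finset ι) (f : ι → ℝ → ℝ → ℂ)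
    (hf : ∀ i, Continuous (Function.uncurry (f i))) {a b c d : ℝ} :
    ∫ x in a..b, ∫ y in c..d, (∑ i ∈ A, f i x y).re =
      (∑ i ∈ A, ∫ x in a..b, ∫ y in c..d, f i x y).re := by
  have hinner : ∀ x, ∫ y in c..d, (∑ i ∈ A, f i x y).re = (∑ i ∈ A, ∫ y in c..d, f i x y).re :=
    fun x => intervalIntegral_re_sum A _ fun i _ => ((hf i).uncurry_left x).intervalIntegrable _ _
  simp only [hinner]
  exact intervalIntegral_re_sum A _ fun i _ =>
    (intervalIntegral.continuous_parametric_intervalIntegral_of_continuous' (hf i) c d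
      ).intervalIntegrable _ _

lemma integral_integral_exp_two_pi_I_mul_add_int_mul (c : ℂ) (m n : ℤ) :
    ∫ x in (0:ℝ)..1, ∫ y in (0:ℝ)..1, exp (2 * π * I * (c + m * x + n * y)) =
      if m = 0 ∧ n = 0 then exp (2 * π * I * c) else 0 := by
  simp only [integral_exp_two_pi_I_mul_add_int_mul (c + _)]
  by_cases hn : n = 0
  · simp [hn, integral_exp_two_pi_I_mul_add_int_mul]
  · simp [hn]

theorem stmt_6_general (ω : ℝ) (k : ℕ) (j : Fin k → ℕ) :
    (∫ x in (0:ℝ)..1, ∫ y in (0:ℝ)..1, ∏ s, v ω (j s) x y) =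
      (∑ a ∈ Fintype.piFinset (fun _ : Fin k => ({-1, 1} : Finset ℤ)),
        if (∑ s, a s) = 0 ∧ (∑ s, a s * (j s : ℤ)) = 0 then
          Complex.exp ((Real.pi : ℂ) * Complex.I * (ω : ℂ) *
            (∑ s, (a s : ℂ) * (j s : ℂ) ^ 2))
        else 0).re := by
  let c : (Fin k → ℤ) → ℂ := fun a => ∑ s, (a s : ℂ) * ((j s : ℂ) * ((j s : ℂ) - 1) / 2 * ω)
  have hprod : ∀ x y, ∏ s, v ω (j s) x y =
      (∑ a ∈ Fintype.piFinset (fun _ : Fin k => ({-1, 1} : Finset ℤ)),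
        exp (2 * π * I * (c a + ((∑ s, a s : ℤ) : ℂ) * x +
          ((∑ s, a s * (j s : ℤ) : ℤ) : ℂ) * y))).re := by
    intro x y
    simp only [v]
    rw [prod_two_cos_eq_re_sum_exp fun s => (j s : ℝ) * ((j s : ℝ) - 1) / 2 * ω + j s * y + x]
    congr 1
    refine Finset.sum_congr rfl fun a _ => ?_
    congr 2
    push_cast
    simp only [c, Finset.sum_mul, ← Finset.sum_add_distrib]
    exact Finset.sum_congr rfl fun s _ => by ring
  simp only [hprod]
  rw [intervalIntegral_intervalIntegral_re_sum _ _ fun a => by fun_prop]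
  simp only [integral_integral_exp_two_pi_I_mul_add_int_mul]
  congr 1
  refine Finset.sum_congr rfl fun a _ => ?_
  split_ifs with h
  · have hlin : ∑ s, (a s : ℂ) * j s = 0 := by exact_mod_cast h.2
    have hphase : 2 * c a = ω * ∑ s, (a s : ℂ) * (j s : ℂ) ^ 2 - ω * ∑ s, (a s : ℂ) * j s := by
      simp only [c, Finset.mul_sum, ← Finset.sum_sub_distrib]
      exact Finset.sum_congr rfl fun s _ => by ring
    congr 1
    linear_combination (π : ℂ) * I * hphase - (π : ℂ) * I * ω * hlin
  · rfl

/-- `∫₀¹∫₀¹ ∏_{s=1}^k v_{j_s} dx dy = Re ∑_{a ∈ {±1}^k, a⊥1, a⊥j} exp(πiω ∑_s a_s j_s²)`. -/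
theorem stmt_6 (ω : ℝ) (k : ℕ) (hk : 1 ≤ k) (j : Fin k → ℕ) (hj : ∀ s, 1 ≤ j s) :
    (∫ x in (0:ℝ)..1, ∫ y in (0:ℝ)..1, ∏ s, v ω (j s) x y) =
      (∑ a ∈ Fintype.piFinset (fun _ : Fin k => ({-1, 1} : Finset ℤ)),
        if (∑ s, a s) = 0 ∧ (∑ s, a s * (j s : ℤ)) = 0 then
          Complex.exp ((Real.pi : ℂ) * Complex.I * (ω : ℂ) *
            (∑ s, (a s : ℂ) * (j s : ℂ) ^ 2))
        else 0).re :=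
  stmt_6_general ω k j
end
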